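/- arXiv:1708.08671 — 2 statements merged into one kernel-verified Lean document; each statement's English description precedes it below -/
import Mathlib

section
/- For all μ > 0, λ > 0 and x > 0, ∫₀ˣ (λ^{3/2}μ/(√(2π)(λ+μ))) z^{−5/2} E(z;μ,λ) dz = Φ(√(λ/x)·(x/μ − 1)) − ((λ−μ)/(λ+μ))·exp(2λ/μ)·Φ(−√(λ/x)·(x/μ + 1)) + (√(2λ)·μ/(√(πx)·(λ+μ)))·exp(λ/μ)·exp(−(λ/(2x))·(x²/μ² + 1)). (This is the cumulative distribution function of the generalized inverse Gaussian distribution with p = −3/2.) -/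
open MeasureTheory Real

/-- Standard normal cumulative distribution function. -/
noncomputable def stdNormalCDF (x : ℝ) : ℝ :=
  ∫ t in Set.Iic x, (Real.sqrt (2 * Real.pi))⁻¹ * Real.exp (-t ^ 2 / 2)

/-- The exponential factor `E(z; μ, λ) = exp(−λ(z−μ)²/(2μ²z))`. -/
noncomputable def gigE (z μ lam : ℝ) : ℝ :=
  Real.exp (-(lam * (z - μ) ^ 2) / (2 * μ ^ 2 * z))

/-!
Read as a function of `x > 0`, the right-hand side (with `exp (λ/μ) exp (-(λ/2x)(x²/μ² + 1))`
folded back into `E(x)`) is an antiderivative of the density. Differentiating the two `Φ`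
terms produces the Gaussian density at `±√(λ/x)(x/μ ∓ 1)`, whose squares differ from
`λ(x-μ)²/(μ²x)` by `0` and `4λ/μ`; this is why `Φ(-…)` carries the factor `exp (2λ/μ)`, and
all three terms then combine into a multiple of `x^(-5/2) E(x)`. As `x → 0⁺` both `Φ`
arguments tend to `-∞` and `x^(-1/2) E(x) → 0`, so the antiderivative extends continuously by
`0`; the density is nonnegative, hence integrable up to `0`, and the fundamental theorem of
calculus applies.
-/

open Filter Set Topology

theorem intervalIntegral.integral_eq_sub_of_hasDerivAt_of_nonneg_of_tendsto {G g : ℝ → ℝ}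
    {a b Ga : ℝ} (hab : a < b) (hderiv : ∀ x ∈ Ioc a b, HasDerivAt G (g x) x)
    (hg : ∀ x ∈ Ioo a b, 0 ≤ g x) (ha : Tendsto G (𝓝[>] a) (𝓝 Ga)) :
    ∫ x in a..b, g x = G b - Ga := by
  have hderiv' : ∀ x ∈ Ioo a b, HasDerivAt G (g x) x :=
    fun x hx => hderiv x (Ioo_subset_Ioc_self hx)
  have hb : Tendsto G (𝓝[<] b) (𝓝 (G b)) :=
    (hderiv b (right_mem_Ioc.2 hab)).continuousAt.tendsto.mono_left nhdsWithin_le_nhds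
  -- `G` extended continuously to `a` has the nonnegative derivative `g`, hence `g` is integrable
  set F := Function.update G a Ga
  have hF : ContinuousOn F (Icc a b) := by
    rw [continuousOn_update_iff, Icc_sdiff_left]
    refine ⟨fun x hx => (hderiv x hx).continuousAt.continuousWithinAt, fun _ => ?_⟩
    exact ha.mono_left (nhdsWithin_mono _ Ioc_subset_Ioi_self)
  have hint : IntervalIntegrable g volume a b := by
    refine intervalIntegral.intervalIntegrable_deriv_of_nonneg (g := F) ?_ ?_ ?_ <;>
      simp only [uIcc_of_le hab.le, min_eq_left hab.le, max_eq_right hab.le]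
    · exact hF
    · intro x hx
      refine (hderiv' x hx).congr_of_eventuallyEq ?_
      filter_upwards [Ioi_mem_nhds hx.1] with y hy using Function.update_of_ne hy.ne' _ _
    · exact hg
  exact intervalIntegral.integral_eq_sub_of_hasDerivAt_of_tendsto hab hderiv' hint ha hb

theorem integrable_gaussian_density :
    Integrable (fun t : ℝ => (√(2 * π))⁻¹ * exp (-t ^ 2 / 2)) := by
  simpa [div_eq_inv_mul, neg_div] using
    (integrable_exp_neg_mul_sq (b := 1 / 2) (by norm_num)).const_mul (√(2 * π))⁻¹

theorem tendsto_stdNormalCDF_atBot : Tendsto stdNormalCDF atBot (𝓝 0) :=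
  tendsto_integral_Iic_zero tendsto_id

theorem hasDerivAt_stdNormalCDF (x : ℝ) :
    HasDerivAt stdNormalCDF ((√(2 * π))⁻¹ * exp (-x ^ 2 / 2)) x := by
  have hcont : Continuous fun t : ℝ => (√(2 * π))⁻¹ * exp (-t ^ 2 / 2) := by fun_prop
  have hprim := intervalIntegral.integral_hasDerivAt_right (a := 0) (b := x)
    integrable_gaussian_density.intervalIntegrable
    hcont.aestronglyMeasurable.stronglyMeasurableAtFilter hcont.continuousAt
  refine (hprim.const_add (stdNormalCDF 0)).congr_of_eventuallyEq
    (Eventually.of_forall fun y => ?_)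
  dsimp only
  rw [← intervalIntegral.integral_Iic_sub_Iic integrable_gaussian_density.integrableOn
    integrable_gaussian_density.integrableOn]
  simp [stdNormalCDF]

theorem hasDerivAt_sqrt_const_div {c y : ℝ} (hc : 0 < c) (hy : 0 < y) :
    HasDerivAt (fun y => √(c / y)) (-√(c / y) / (2 * y)) y := by
  convert (hasDerivAt_inv hy.ne').const_mul c |>.sqrt (div_pos hc hy).ne' using 1
  · simp only [div_eq_mul_inv]
  have hq2 : y * √(c / y) ^ 2 = c := by rw [sq_sqrt (div_pos hc hy).le]; field_simp
  rw [← div_eq_mul_inv]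
  field_simp
  linear_combination -hq2

section gigE

variable {μ lam y : ℝ}

theorem hasDerivAt_gigE (hμ : μ ≠ 0) (hy : y ≠ 0) :
    HasDerivAt (fun z => gigE z μ lam)
      (lam * (μ ^ 2 - y ^ 2) / (2 * μ ^ 2 * y ^ 2) * gigE y μ lam) y := by
  have h : HasDerivAt (fun z => -(lam * (z - μ) ^ 2) / (2 * μ ^ 2 * z))
      ((-(lam * (2 * (y - μ))) * (2 * μ ^ 2 * y) - -(lam * (y - μ) ^ 2) * (2 * μ ^ 2 * 1)) /
        (2 * μ ^ 2 * y) ^ 2) y := by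
    refine HasDerivAt.div ?_ ?_ (by positivity)
    · exact ((((hasDerivAt_id y).sub_const μ).pow 2).const_mul lam).neg.congr_deriv (by simp)
    · exact (hasDerivAt_id y).const_mul _
  refine h.exp.congr_deriv ?_
  rw [gigE, mul_comm]
  field_simp
  ring

theorem exp_neg_sq_div_two_eq_gigE (hμ : μ ≠ 0) (hlam : 0 ≤ lam) (hy : 0 < y) :
    exp (-(√(lam / y) * (y / μ - 1)) ^ 2 / 2) = gigE y μ lam := by
  rw [gigE, mul_pow, sq_sqrt (div_nonneg hlam hy.le)]
  congr 1
  field_simp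

theorem exp_neg_sq_div_two_eq_gigE_div (hμ : μ ≠ 0) (hlam : 0 ≤ lam) (hy : 0 < y) :
    exp (-(-√(lam / y) * (y / μ + 1)) ^ 2 / 2) = gigE y μ lam / exp (2 * lam / μ) := by
  rw [gigE, ← exp_sub, mul_pow, neg_sq, sq_sqrt (div_nonneg hlam hy.le)]
  congr 1
  field_simp
  ring

theorem gigE_eq_exp_mul_exp (hμ : μ ≠ 0) (hy : y ≠ 0) :
    gigE y μ lam = exp (lam / μ) * exp (-(lam / (2 * y)) * (y ^ 2 / μ ^ 2 + 1)) := by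
  rw [gigE, ← exp_add]
  congr 1
  field_simp
  ring

theorem gigE_le (hμ : μ ≠ 0) (hlam : 0 ≤ lam) (hy : 0 < y) :
    gigE y μ lam ≤ exp (lam / μ) * exp (-(lam / 2) * y⁻¹) := by
  rw [← exp_add, gigE, exp_le_exp]
  have hgap : lam / μ + -(lam / 2) * y⁻¹ - (-(lam * (y - μ) ^ 2) / (2 * μ ^ 2 * y))
      = lam * y / (2 * μ ^ 2) := by
    field_simp
    ring
  have hgap_nonneg : 0 ≤ lam * y / (2 * μ ^ 2) := by positivity
  linarith

theorem tendsto_inv_sqrt_mul_gigE_nhdsGT_zero (hμ : μ ≠ 0) (hlam : 0 < lam) :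
    Tendsto (fun y => (√y)⁻¹ * gigE y μ lam) (𝓝[>] 0) (𝓝 0) := by
  have hbound : Tendsto
      (fun y => exp (lam / μ) * ((y⁻¹) ^ (1 / 2 : ℝ) * exp (-(lam / 2) * y⁻¹))) (𝓝[>] 0) (𝓝 0) := by
    simpa using ((tendsto_rpow_mul_exp_neg_mul_atTop_nhds_zero (1 / 2) (lam / 2)
      (by positivity)).comp tendsto_inv_nhdsGT_zero).const_mul (exp (lam / μ))
  refine tendsto_of_tendsto_of_tendsto_of_le_of_le' tendsto_const_nhds hbound ?_ ?_ <;>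
    filter_upwards [self_mem_nhdsWithin] with y (hy : 0 < y)
  · exact mul_nonneg (inv_nonneg.2 (sqrt_nonneg y)) (exp_pos _).le
  · rw [← sqrt_eq_rpow, sqrt_inv, mul_left_comm]
    exact mul_le_mul_of_nonneg_left (gigE_le hμ hlam.le hy) (inv_nonneg.2 (sqrt_nonneg y))

end gigE

noncomputable def gigDensity (μ lam z : ℝ) : ℝ :=
  lam ^ ((3:ℝ)/2) * μ / (√(2 * π) * (lam + μ)) * z ^ (-(5:ℝ)/2) * gigE z μ lam

noncomputable def gigCDF (μ lam x : ℝ) : ℝ :=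
  stdNormalCDF (√(lam / x) * (x / μ - 1))
    - (lam - μ) / (lam + μ) * exp (2 * lam / μ) * stdNormalCDF (-√(lam / x) * (x / μ + 1))
    + √(2 * lam) * μ / (√π * (lam + μ)) * ((√x)⁻¹ * gigE x μ lam)

section gigCDF

variable {μ lam y : ℝ}

theorem gigDensity_nonneg (hμ : 0 < μ) (hlam : 0 ≤ lam) (hy : 0 ≤ y) :
    0 ≤ gigDensity μ lam y := by
  unfold gigDensity gigE
  positivity

theorem gigCDF_eq (hμ : μ ≠ 0) (hy : 0 < y) :
    gigCDF μ lam y = stdNormalCDF (√(lam / y) * (y / μ - 1))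
      - (lam - μ) / (lam + μ) * exp (2 * lam / μ) * stdNormalCDF (-√(lam / y) * (y / μ + 1))
      + √(2 * lam) * μ / (√(π * y) * (lam + μ)) * exp (lam / μ)
        * exp (-(lam / (2 * y)) * (y ^ 2 / μ ^ 2 + 1)) := by
  rw [gigCDF, gigE_eq_exp_mul_exp hμ hy.ne', sqrt_mul pi_pos.le]
  simp only [div_eq_mul_inv, mul_inv]
  ring

theorem hasDerivAt_gigCDF (hμ : 0 < μ) (hlam : 0 < lam) (hy : 0 < y) :
    HasDerivAt (gigCDF μ lam) (gigDensity μ lam y) y := by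
  have hq := hasDerivAt_sqrt_const_div hlam hy
  have ha : HasDerivAt (fun y => √(lam / y) * (y / μ - 1))
      (√(lam / y) * (y / μ + 1) / (2 * y)) y := by
    refine (hq.fun_mul (((hasDerivAt_id' y).div_const μ).sub_const 1)).congr_deriv ?_
    field_simp
    ring
  have hb : HasDerivAt (fun y => -√(lam / y) * (y / μ + 1))
      (-√(lam / y) * (y / μ - 1) / (2 * y)) y := by
    refine (hq.fun_neg.fun_mul (((hasDerivAt_id' y).div_const μ).add_const 1)).congr_deriv ?_
    field_simp
    ring
  have hc : HasDerivAt (fun y => (√y)⁻¹ * gigE y μ lam)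
      (-(1 / (2 * √y)) / √y ^ 2 * gigE y μ lam +
        (√y)⁻¹ * (lam * (μ ^ 2 - y ^ 2) / (2 * μ ^ 2 * y ^ 2) * gigE y μ lam)) y :=
    ((hasDerivAt_sqrt hy.ne').inv (sqrt_pos.2 hy).ne').mul (hasDerivAt_gigE hμ.ne' hy.ne')
  refine (((hasDerivAt_stdNormalCDF _).comp y ha).sub
    (((hasDerivAt_stdNormalCDF _).comp y hb).const_mul
      ((lam - μ) / (lam + μ) * exp (2 * lam / μ))) |>.add
    (hc.const_mul (√(2 * lam) * μ / (√π * (lam + μ))))).congr_deriv ?_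
  rw [exp_neg_sq_div_two_eq_gigE hμ.ne' hlam.le hy,
    exp_neg_sq_div_two_eq_gigE_div hμ.ne' hlam.le hy]
  -- what remains is a rational identity in `√y`, `√λ`, `√2` and `√π`
  rw [gigDensity, rpow_div_two_eq_sqrt _ hlam.le, rpow_div_two_eq_sqrt _ hy.le,
    rpow_neg (sqrt_nonneg _), rpow_ofNat, rpow_ofNat, sqrt_div hlam.le,
    sqrt_mul zero_le_two lam, sqrt_mul zero_le_two π]
  have hs : 0 < √y := sqrt_pos.2 hy
  have hl : 0 < √lam := sqrt_pos.2 hlam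
  rw [← sq_sqrt hy.le, ← sq_sqrt hlam.le]
  simp only [sqrt_sq hs.le, sqrt_sq hl.le]
  field_simp
  rw [sq_sqrt zero_le_two]
  ring

theorem tendsto_gigCDF_nhdsGT_zero (hμ : μ ≠ 0) (hlam : 0 < lam) :
    Tendsto (gigCDF μ lam) (𝓝[>] 0) (𝓝 0) := by
  have hq : Tendsto (fun y => √(lam / y)) (𝓝[>] 0) atTop :=
    tendsto_sqrt_atTop.comp (tendsto_inv_nhdsGT_zero.const_mul_atTop hlam)
  have ha := tendsto_stdNormalCDF_atBot.comp (hq.atTop_mul_neg (C := 0 / μ - 1) (by simp)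
    (by fun_prop : Continuous fun y => y / μ - 1).continuousWithinAt)
  have hb := tendsto_stdNormalCDF_atBot.comp ((tendsto_neg_atTop_atBot.comp hq).atBot_mul_pos
    (C := 0 / μ + 1) (by simp) (by fun_prop : Continuous fun y => y / μ + 1).continuousWithinAt)
  convert (ha.sub (hb.const_mul ((lam - μ) / (lam + μ) * exp (2 * lam / μ)))).add
    ((tendsto_inv_sqrt_mul_gigE_nhdsGT_zero hμ hlam).const_mul
      (√(2 * lam) * μ / (√π * (lam + μ)))) using 1
  · rfl
  · simp

end gigCDF

/-- C.d.f. of the generalized inverse Gaussian distribution with `p = −3/2`. -/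
theorem gig_cdf_neg_three_half (μ lam x : ℝ) (hμ : 0 < μ) (hlam : 0 < lam) (hx : 0 < x) :
    (∫ z in (0:ℝ)..x,
        lam ^ ((3:ℝ)/2) * μ / (Real.sqrt (2 * Real.pi) * (lam + μ)) * z ^ (-(5:ℝ)/2)
          * gigE z μ lam)
      = stdNormalCDF (Real.sqrt (lam / x) * (x / μ - 1))
        - (lam - μ) / (lam + μ) * Real.exp (2 * lam / μ)
            * stdNormalCDF (-(Real.sqrt (lam / x)) * (x / μ + 1))
        + Real.sqrt (2 * lam) * μ / (Real.sqrt (Real.pi * x) * (lam + μ))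
            * Real.exp (lam / μ) * Real.exp (-(lam / (2 * x)) * (x ^ 2 / μ ^ 2 + 1)) := by
  have h := intervalIntegral.integral_eq_sub_of_hasDerivAt_of_nonneg_of_tendsto hx
    (fun y hy => hasDerivAt_gigCDF hμ hlam hy.1)
    (fun y hy => gigDensity_nonneg hμ hlam.le hy.1.le)
    (tendsto_gigCDF_nhdsGT_zero hμ.ne' hlam)
  rwa [sub_zero, gigCDF_eq hμ.ne' hx] at h
end

section
/- For every c > 0, I_F := ∫₀^{X−1} ((x − Mc(1+x))/(1+x)²) φ_{cM(1+x), c²D²(1+x)/(u+cv)}(x) dx = −(c²D²/(u+cv))·[Φ(A(x)) + exp(2λ(1−cM))·Φ(B(x))]|₁^X + 2(1−cM)·exp(2λ(1−cM))·[Φ(B(x))]|₁^X − [(2cD/√(2πx(u+cv)))·exp(−(u+cv)(x(1−cM)−1)²/(2x c²D²))]|₁^X, where [g(x)]|₁^X denotes g(X) − g(1). -/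
open MeasureTheory Real

/-- P.d.f. of the normal distribution with mean `m` and variance `s2`. -/
noncomputable def normalPdf (m s2 x : ℝ) : ℝ :=
  (Real.sqrt (2 * Real.pi * s2))⁻¹ * Real.exp (-(x - m) ^ 2 / (2 * s2))

/-- `A(x) = (√(u+cv)/(cD√x))·(x(1−cM) − 1)`. -/
noncomputable def Afun (u c v M D x : ℝ) : ℝ :=
  Real.sqrt (u + c * v) / (c * D * Real.sqrt x) * (x * (1 - c * M) - 1)

/-- `B(x) = −(√(u+cv)/(cD√x))·(1 + x(1−cM))`. -/
noncomputable def Bfun (u c v M D x : ℝ) : ℝ :=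
  -(Real.sqrt (u + c * v) / (c * D * Real.sqrt x)) * (1 + x * (1 - c * M))

/-- The boundary term `(2cD/√(2πx(u+cv)))·exp(−(u+cv)(x(1−cM)−1)²/(2x c²D²))`. -/
noncomputable def Gfun (u c v M D x : ℝ) : ℝ :=
  2 * c * D / Real.sqrt (2 * Real.pi * x * (u + c * v)) *
    Real.exp (-((u + c * v) * (x * (1 - c * M) - 1) ^ 2) / (2 * x * (c ^ 2 * D ^ 2)))

/-! Substituting `y = 1 + x` turns `I_F` into an integral over `[1, X]`, and the right-hand side is
`F(X) - F(1)` for the bracketed expression `F`, so it suffices to differentiate `F` on `y > 0`.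
Put `k = √(u+cv)/(cD)` (so `λ = k²`) and `α = 1 - cM`. The normal density in the integrand is
`(k/√y) φ(A(y))`, and `B² - A² = 4λα` gives `e^{2λα} φ(B) = φ(A)`; after this substitution every
term of `F'` is a multiple of `φ(A)`, and the multiples add up to the integrand. -/

lemma normalPdf_zero_one : normalPdf 0 1 = fun x ↦ (√(2 * π))⁻¹ * exp (-x ^ 2 / 2) := by
  ext; simp [normalPdf]

lemma continuous_normalPdf_zero_one : Continuous (normalPdf 0 1) := by
  unfold normalPdf; fun_prop

lemma integrable_normalPdf_zero_one : Integrable (normalPdf 0 1) := by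
  rw [normalPdf_zero_one]
  convert (integrable_exp_neg_mul_sq (b := 1 / 2) (by norm_num)).const_mul (√(2 * π))⁻¹
    using 4
  ring

lemma stdNormalCDF_eq_integral_Iic (x : ℝ) :
    stdNormalCDF x = ∫ t in Set.Iic x, normalPdf 0 1 t := by
  simp only [stdNormalCDF, normalPdf_zero_one]

lemma hasDerivAt_stdNormalCDF_s9 (x : ℝ) : HasDerivAt stdNormalCDF (normalPdf 0 1 x) x := by
  have h : stdNormalCDF = fun z ↦ stdNormalCDF 0 + ∫ t in (0 : ℝ)..z, normalPdf 0 1 t := by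
    funext z
    rw [← intervalIntegral.integral_Iic_sub_Iic integrable_normalPdf_zero_one.integrableOn
      integrable_normalPdf_zero_one.integrableOn, stdNormalCDF_eq_integral_Iic,
      stdNormalCDF_eq_integral_Iic]
    ring
  rw [h]
  exact (intervalIntegral.integral_hasDerivAt_right
    integrable_normalPdf_zero_one.intervalIntegrable
    (continuous_normalPdf_zero_one.stronglyMeasurableAtFilter _ _)
    continuous_normalPdf_zero_one.continuousAt).const_add _

lemma hasDerivAt_normalPdf_zero_one (x : ℝ) :
    HasDerivAt (normalPdf 0 1) (-x * normalPdf 0 1 x) x := by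
  have h : HasDerivAt (fun x : ℝ ↦ -x ^ 2 / 2) (-x) x :=
    ((hasDerivAt_pow 2 x).fun_neg.div_const 2).congr_deriv (by ring)
  simp only [normalPdf_zero_one]
  exact (h.exp.const_mul _).congr_deriv (by ring)

lemma normalPdf_zero_one_mul_exp (a b : ℝ) :
    normalPdf 0 1 b * exp ((b ^ 2 - a ^ 2) / 2) = normalPdf 0 1 a := by
  simp only [normalPdf_zero_one]
  rw [mul_assoc, ← exp_add]
  ring_nf

lemma normalPdf_sq_eq_div {s : ℝ} (hs : 0 < s) (m x : ℝ) :
    normalPdf m (s ^ 2) x = normalPdf 0 1 ((x - m) / s) / s := by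
  simp only [normalPdf_zero_one]
  rw [normalPdf, mul_comm (2 * π), sqrt_mul (by positivity), sqrt_sq hs.le]
  field_simp

section Primitive

variable (k α : ℝ)

/- `argA k α`, `argB k α` are `A`, `B` and `primitiveIF k α` is the bracketed expression of the
statement, written in terms of `k = √(u+cv)/(cD)` and `α = 1 - cM`. -/
noncomputable def argA (y : ℝ) : ℝ := k / √y * (y * α - 1)

noncomputable def argB (y : ℝ) : ℝ := -(k / √y) * (1 + y * α)

noncomputable def primitiveIF (y : ℝ) : ℝ :=
  -(1 / k ^ 2) * (stdNormalCDF (argA k α y) + exp (2 * k ^ 2 * α) * stdNormalCDF (argB k α y))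
    + 2 * α * exp (2 * k ^ 2 * α) * stdNormalCDF (argB k α y)
    - 2 / k / √y * normalPdf 0 1 (argA k α y)

variable {k α} {y : ℝ}

lemma hasDerivAt_div_sqrt (hy : 0 < y) :
    HasDerivAt (fun y ↦ k / √y) (-(k / √y) / (2 * y)) y := by
  have hs : √y ≠ 0 := (sqrt_pos.2 hy).ne'
  refine ((hasDerivAt_sqrt hy.ne').fun_inv hs |>.const_mul k).congr_deriv ?_
  field_simp
  rw [sq_sqrt hy.le]

lemma hasDerivAt_argA (hy : 0 < y) :
    HasDerivAt (argA k α) (k / √y * (y * α + 1) / (2 * y)) y := by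
  refine ((hasDerivAt_div_sqrt hy).mul
    (((hasDerivAt_id y).mul_const α).sub_const 1)).congr_deriv ?_
  simp only [id]
  field_simp
  ring

lemma hasDerivAt_argB (hy : 0 < y) :
    HasDerivAt (argB k α) (k / √y * (1 - y * α) / (2 * y)) y := by
  refine ((hasDerivAt_div_sqrt hy).fun_neg.mul
    (((hasDerivAt_id y).mul_const α).const_add 1)).congr_deriv ?_
  simp only [id]
  field_simp
  ring

lemma normalPdf_argB_mul_exp (hy : 0 < y) :
    normalPdf 0 1 (argB k α y) * exp (2 * k ^ 2 * α) = normalPdf 0 1 (argA k α y) := by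
  have h : (argB k α y ^ 2 - argA k α y ^ 2) / 2 = 2 * k ^ 2 * α := by
    simp only [argA, argB]
    field_simp
    rw [sq_sqrt hy.le]
    ring
  rw [← h, normalPdf_zero_one_mul_exp]

theorem hasDerivAt_primitiveIF (hk : k ≠ 0) (hy : 0 < y) :
    HasDerivAt (primitiveIF k α)
      ((α * y - 1) / y ^ 2 * (k / √y * normalPdf 0 1 (argA k α y))) y := by
  have hA := hasDerivAt_argA (k := k) (α := α) hy
  have hB := hasDerivAt_argB (k := k) (α := α) hy
  have hΦA := (hasDerivAt_stdNormalCDF_s9 _).comp y hA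
  have hΦB := (hasDerivAt_stdNormalCDF_s9 _).comp y hB
  have hφA := (hasDerivAt_normalPdf_zero_one _).comp y hA
  refine (((hΦA.add (hΦB.const_mul (exp (2 * k ^ 2 * α)))).const_mul (-(1 / k ^ 2))).add
    (hΦB.const_mul (2 * α * exp (2 * k ^ 2 * α)))
    |>.sub ((hasDerivAt_div_sqrt (k := 2 / k) hy).mul hφA)).congr_deriv ?_
  simp only [Function.comp_apply]
  rw [← normalPdf_argB_mul_exp hy]
  simp only [argA]
  generalize exp (2 * k ^ 2 * α) = E
  generalize normalPdf 0 1 (argB k α y) = q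
  have hs : √y ≠ 0 := (sqrt_pos.2 hy).ne'
  have hsy : √y ^ 2 = y := sq_sqrt hy.le
  generalize √y = s at hs hsy ⊢
  subst hsy
  field_simp
  ring

end Primitive

section Parameters

variable (u c v M D : ℝ)

noncomputable def integrandIF (y : ℝ) : ℝ :=
  (y - 1 - M * c * y) / y ^ 2 * normalPdf (c * M * y) (c ^ 2 * D ^ 2 * y / (u + c * v)) (y - 1)

noncomputable def antiderivIF (y : ℝ) : ℝ :=
  -(c ^ 2 * D ^ 2 / (u + c * v)) *
      (stdNormalCDF (Afun u c v M D y)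
        + exp (2 * ((u + c * v) / (c ^ 2 * D ^ 2)) * (1 - c * M)) * stdNormalCDF (Bfun u c v M D y))
    + 2 * (1 - c * M) * exp (2 * ((u + c * v) / (c ^ 2 * D ^ 2)) * (1 - c * M))
        * stdNormalCDF (Bfun u c v M D y)
    - Gfun u c v M D y

variable {u c v M D} {y : ℝ}

lemma Afun_eq_argA : Afun u c v M D y = argA (√(u + c * v) / (c * D)) (1 - c * M) y := by
  rw [Afun, argA, div_div]

lemma Bfun_eq_argB : Bfun u c v M D y = argB (√(u + c * v) / (c * D)) (1 - c * M) y := by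
  rw [Bfun, argB, div_div]

lemma Gfun_eq_mul_normalPdf_Afun (huv : 0 < u + c * v) (hc : c ≠ 0) (hD : D ≠ 0) (hy : 0 < y) :
    Gfun u c v M D y
      = 2 / (√(u + c * v) / (c * D)) / √y * normalPdf 0 1 (Afun u c v M D y) := by
  have hexp : -((u + c * v) * (y * (1 - c * M) - 1) ^ 2) / (2 * y * (c ^ 2 * D ^ 2))
      = -Afun u c v M D y ^ 2 / 2 := by
    rw [Afun, div_mul_eq_mul_div, div_pow, mul_pow, mul_pow, sq_sqrt huv.le, sq_sqrt hy.le]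
    field_simp
  rw [Gfun, normalPdf_zero_one, hexp, sqrt_mul (by positivity), sqrt_mul (by positivity)]
  field_simp

lemma normalPdf_eq_mul_normalPdf_Afun (huv : 0 < u + c * v) (hc : 0 < c) (hD : 0 < D) (hy : 0 < y) :
    normalPdf (c * M * y) (c ^ 2 * D ^ 2 * y / (u + c * v)) (y - 1)
      = √(u + c * v) / (c * D) / √y * normalPdf 0 1 (Afun u c v M D y) := by
  have hs : 0 < c * D * √y / √(u + c * v) := by positivity
  have hvar : c ^ 2 * D ^ 2 * y / (u + c * v) = (c * D * √y / √(u + c * v)) ^ 2 := by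
    rw [div_pow, mul_pow, mul_pow, sq_sqrt huv.le, sq_sqrt hy.le]
  have harg : (y - 1 - c * M * y) / (c * D * √y / √(u + c * v)) = Afun u c v M D y := by
    rw [Afun]; field_simp; ring
  rw [hvar, normalPdf_sq_eq_div hs, harg]
  field_simp

lemma antiderivIF_eq_primitiveIF (huv : 0 < u + c * v) (hc : 0 < c) (hD : 0 < D) (hy : 0 < y) :
    antiderivIF u c v M D y = primitiveIF (√(u + c * v) / (c * D)) (1 - c * M) y := by
  have hk2 : (u + c * v) / (c ^ 2 * D ^ 2) = (√(u + c * v) / (c * D)) ^ 2 := by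
    rw [div_pow, mul_pow, sq_sqrt huv.le]
  rw [antiderivIF, primitiveIF, Gfun_eq_mul_normalPdf_Afun huv hc.ne' hD.ne' hy, Afun_eq_argA,
    Bfun_eq_argB, ← one_div_div, hk2]

lemma hasDerivAt_antiderivIF (huv : 0 < u + c * v) (hc : 0 < c) (hD : 0 < D) (hy : 0 < y) :
    HasDerivAt (antiderivIF u c v M D) (integrandIF u c v M D y) y := by
  have hk : √(u + c * v) / (c * D) ≠ 0 := by positivity
  refine ((hasDerivAt_primitiveIF (α := 1 - c * M) hk hy).congr_of_eventuallyEq ?_).congr_deriv ?_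
  · filter_upwards [Ioi_mem_nhds hy] with z hz using antiderivIF_eq_primitiveIF huv hc hD hz
  · rw [integrandIF, normalPdf_eq_mul_normalPdf_Afun huv hc hD hy, Afun_eq_argA]
    ring

lemma continuousOn_integrandIF (huv : 0 < u + c * v) (hc : c ≠ 0) (hD : D ≠ 0) :
    ContinuousOn (integrandIF u c v M D) (Set.Ioi 0) := by
  intro y hy
  have hy : 0 < y := hy
  unfold integrandIF normalPdf
  fun_prop (disch := positivity)

end Parameters

theorem IF_eq_general (u c v t M D : ℝ)
    (hu : 0 < u) (hc : 0 < c) (hv : 0 ≤ v) (ht : v < t) (hD : 0 < D) :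
    (∫ x in (0:ℝ)..(c * (t - v) / (u + c * v)),
        (x - M * c * (1 + x)) / (1 + x) ^ 2 *
          normalPdf (c * M * (1 + x)) (c ^ 2 * D ^ 2 * (1 + x) / (u + c * v)) x)
      = -(c ^ 2 * D ^ 2 / (u + c * v)) *
          ((stdNormalCDF (Afun u c v M D (c * (t - v) / (u + c * v) + 1))
              + Real.exp (2 * ((u + c * v) / (c ^ 2 * D ^ 2)) * (1 - c * M))
                  * stdNormalCDF (Bfun u c v M D (c * (t - v) / (u + c * v) + 1)))
            - (stdNormalCDF (Afun u c v M D 1)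
              + Real.exp (2 * ((u + c * v) / (c ^ 2 * D ^ 2)) * (1 - c * M))
                  * stdNormalCDF (Bfun u c v M D 1)))
        + 2 * (1 - c * M) * Real.exp (2 * ((u + c * v) / (c ^ 2 * D ^ 2)) * (1 - c * M)) *
            (stdNormalCDF (Bfun u c v M D (c * (t - v) / (u + c * v) + 1))
              - stdNormalCDF (Bfun u c v M D 1))
        - (Gfun u c v M D (c * (t - v) / (u + c * v) + 1) - Gfun u c v M D 1) := by
  have huv : 0 < u + c * v := by positivity
  have hX : 1 ≤ c * (t - v) / (u + c * v) + 1 := by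
    have : 0 ≤ c * (t - v) / (u + c * v) := div_nonneg (mul_nonneg hc.le (by linarith)) huv.le
    linarith
  have hpos : Set.uIcc 1 (c * (t - v) / (u + c * v) + 1) ⊆ Set.Ioi 0 := by
    rw [Set.uIcc_of_le hX]
    exact fun y hy ↦ one_pos.trans_le hy.1
  calc _ = ∫ x in (0:ℝ)..(c * (t - v) / (u + c * v)), integrandIF u c v M D (x + 1) := by
        congr 1 with x
        rw [integrandIF, add_sub_cancel_right, add_comm x]
    _ = ∫ y in (1:ℝ)..(c * (t - v) / (u + c * v) + 1), integrandIF u c v M D y := by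
        rw [intervalIntegral.integral_comp_add_right, zero_add]
    _ = antiderivIF u c v M D (c * (t - v) / (u + c * v) + 1) - antiderivIF u c v M D 1 :=
        intervalIntegral.integral_eq_sub_of_hasDerivAt
          (fun y hy ↦ hasDerivAt_antiderivIF huv hc hD (hpos hy))
          ((continuousOn_integrandIF huv hc.ne' hD.ne').mono hpos).intervalIntegrable
    _ = _ := by
        simp only [antiderivIF]
        ring

/-- Explicit expression for `I_F` for every `c > 0`. -/
theorem IF_eq (u c v t M D : ℝ)
    (hu : 0 < u) (hc : 0 < c) (hv : 0 ≤ v) (ht : v < t) (hM : 0 < M) (hD : 0 < D) :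
    (∫ x in (0:ℝ)..(c * (t - v) / (u + c * v)),
        (x - M * c * (1 + x)) / (1 + x) ^ 2 *
          normalPdf (c * M * (1 + x)) (c ^ 2 * D ^ 2 * (1 + x) / (u + c * v)) x)
      = -(c ^ 2 * D ^ 2 / (u + c * v)) *
          ((stdNormalCDF (Afun u c v M D (c * (t - v) / (u + c * v) + 1))
              + Real.exp (2 * ((u + c * v) / (c ^ 2 * D ^ 2)) * (1 - c * M))
                  * stdNormalCDF (Bfun u c v M D (c * (t - v) / (u + c * v) + 1)))
            - (stdNormalCDF (Afun u c v M D 1)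
              + Real.exp (2 * ((u + c * v) / (c ^ 2 * D ^ 2)) * (1 - c * M))
                  * stdNormalCDF (Bfun u c v M D 1)))
        + 2 * (1 - c * M) * Real.exp (2 * ((u + c * v) / (c ^ 2 * D ^ 2)) * (1 - c * M)) *
            (stdNormalCDF (Bfun u c v M D (c * (t - v) / (u + c * v) + 1))
              - stdNormalCDF (Bfun u c v M D 1))
        - (Gfun u c v M D (c * (t - v) / (u + c * v) + 1) - Gfun u c v M D 1) :=
  IF_eq_general u c v t M D hu hc hv ht hD
end
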